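/- Let (Ω,Σ,μ) be a finite measure space with μ(Ω) > 0, 1 ≤ p < ∞, (M,d) a metric space, S ⊆ M a countable subset, K > 0, and T : S → L^p(μ) a map that is pointwise K-Lipschitz μ-a.e., i.e., for every x,y ∈ S, |T(x) − T(y)| ≤ K·d(x,y) holds μ-almost everywhere. Then there exist: a map T̂ : M → L^p(μ) extending T with |T̂(x) − T̂(y)| ≤ K·d(x,y) μ-a.e. for all x,y ∈ M; a complete metric space (N,D); a map j : M → N with dense range satisfying D(j(x),j(y)) = (1/(K·μ(Ω)^{1/p}))·‖T̂(x) − T̂(y)‖_{L^p(μ)} for all x,y ∈ M (so j is 1-Lipschitz); and a map T̄ : N → L^p(μ) that is Lipschitz with constant K·μ(Ω)^{1/p} and satisfies T̂ = T̄ ∘ j. -/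

import Mathlib

/-!
On a countable set `S` the defining a.e. inequalities hold simultaneously off one null set, so
the McShane formula `T̂ x ω = ⨅ y ∈ S, T y ω + K * dist x y` extends `T` pointwise at almost every
`ω` with the same Lipschitz constant; it is measurable in `ω` because the infimum is countable,
and in `L^p` because it stays within `K * dist x y₀` of `T y₀`. The factorization is the completion
of `M` for the pseudometric pulled back along `T̂ / (K μ(Ω)^(1/p))`, on which `T̂` is
`K μ(Ω)^(1/p)`-Lipschitz and therefore extends to the completion.
-/

open MeasureTheory Set UniformSpace
open scoped ENNReal NNReal

section McShane

variable {M : Type*} [PseudoMetricSpace M] {s : Set M}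

noncomputable def mcShaneExtension (K : ℝ) (g : s → ℝ) (x : M) : ℝ :=
  ⨅ y : s, g y + K * dist x y

variable {K : ℝ} {g : s → ℝ}

theorem bddBelow_range_add_mul_dist [Nonempty s] (hK : 0 ≤ K)
    (hg : ∀ y z : s, g y - g z ≤ K * dist (y : M) z) (x : M) :
    BddBelow (range fun y : s => g y + K * dist x y) := by
  obtain ⟨y₀⟩ := ‹Nonempty s›
  refine ⟨g y₀ - K * dist x y₀, ?_⟩
  rintro _ ⟨y, rfl⟩
  have htri : K * dist (y₀ : M) y ≤ K * dist x y₀ + K * dist x y := by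
    rw [← mul_add]; gcongr; exact dist_triangle_left _ _ _
  linarith [hg y₀ y]

theorem mcShaneExtension_le [Nonempty s] (hK : 0 ≤ K)
    (hg : ∀ y z : s, g y - g z ≤ K * dist (y : M) z) (x : M) (y : s) :
    mcShaneExtension K g x ≤ g y + K * dist x y :=
  ciInf_le (bddBelow_range_add_mul_dist hK hg x) y

theorem mcShaneExtension_coe (hK : 0 ≤ K) (hg : ∀ y z : s, g y - g z ≤ K * dist (y : M) z)
    (y : s) : mcShaneExtension K g y = g y := by
  have : Nonempty s := ⟨y⟩
  refine le_antisymm (by simpa using mcShaneExtension_le hK hg y y) (le_ciInf fun z => ?_)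
  linarith [hg y z]

theorem mcShaneExtension_sub_le [Nonempty s] (hK : 0 ≤ K)
    (hg : ∀ y z : s, g y - g z ≤ K * dist (y : M) z) (x x' : M) :
    mcShaneExtension K g x - mcShaneExtension K g x' ≤ K * dist x x' := by
  suffices mcShaneExtension K g x - K * dist x x' ≤ mcShaneExtension K g x' by linarith
  refine le_ciInf fun y => ?_
  have htri : K * dist x y ≤ K * dist x x' + K * dist x' y := by
    rw [← mul_add]; gcongr; exact dist_triangle _ _ _
  linarith [mcShaneExtension_le hK hg x y]

theorem abs_mcShaneExtension_sub_le [Nonempty s] (hK : 0 ≤ K)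
    (hg : ∀ y z : s, g y - g z ≤ K * dist (y : M) z) (x x' : M) :
    |mcShaneExtension K g x - mcShaneExtension K g x'| ≤ K * dist x x' :=
  abs_sub_le_iff.2 ⟨mcShaneExtension_sub_le hK hg x x',
    dist_comm x x' ▸ mcShaneExtension_sub_le hK hg x' x⟩

end McShane

section Extension

variable {Ω : Type*} [MeasurableSpace Ω] {μ : Measure Ω} {p : ℝ≥0∞}

theorem MeasureTheory.MemLp.of_ae_norm_sub_le {E : Type*} [NormedAddCommGroup E] [IsFiniteMeasure μ]
    {f g : Ω → E} (hf : AEStronglyMeasurable f μ) (hg : MemLp g p μ) {C : ℝ}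
    (h : ∀ᵐ ω ∂μ, ‖f ω - g ω‖ ≤ C) : MemLp f p μ := by
  simpa using (MemLp.of_bound (hf.sub hg.1) C h).add hg

theorem exists_ae_lipschitz_extension_Lp [IsFiniteMeasure μ] {M : Type*} [PseudoMetricSpace M]
    {S : Set M} (hS : S.Countable) {K : ℝ} (hK : 0 ≤ K) (T : S → Lp ℝ p μ)
    (hT : ∀ x y : S, ∀ᵐ ω ∂μ, |T x ω - T y ω| ≤ K * dist (x : M) (y : M)) :
    ∃ That : M → Lp ℝ p μ, (∀ x : S, That x = T x) ∧
      ∀ x y : M, ∀ᵐ ω ∂μ, |That x ω - That y ω| ≤ K * dist x y := by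
  rcases isEmpty_or_nonempty S with hSe | hSne
  · refine ⟨0, isEmptyElim, fun x y => ?_⟩
    filter_upwards [Lp.coeFn_zero ℝ p μ] with ω h
    simp only [Pi.zero_apply, h, sub_zero, abs_zero]
    positivity
  have ⟨y₀⟩ := hSne
  have : Countable S := hS.to_subtype
  have hgood : ∀ᵐ ω ∂μ, ∀ y z : S, T y ω - T z ω ≤ K * dist (y : M) z := by
    simp only [ae_all_iff]
    exact fun y z => (hT y z).mono fun ω h => (abs_sub_le_iff.1 h).1
  set G : M → Ω → ℝ := fun x ω => mcShaneExtension K (fun y => T y ω) x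
  have hG_meas (x : M) : Measurable (G x) :=
    .iInf fun y => (Lp.stronglyMeasurable (T y)).measurable.add_const _
  have hG_mem (x : M) : MemLp (G x) p μ := by
    refine .of_ae_norm_sub_le (hG_meas x).aestronglyMeasurable (Lp.memLp (T y₀))
      (C := K * dist x y₀) ?_
    filter_upwards [hgood] with ω hω
    simpa only [Real.norm_eq_abs, G, mcShaneExtension_coe hK hω] using
      abs_mcShaneExtension_sub_le hK hω x y₀
  refine ⟨fun x => (hG_mem x).toLp (G x), fun y => Lp.ext ?_, fun x x' => ?_⟩
  · filter_upwards [(hG_mem y).coeFn_toLp, hgood] with ω hy hω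
    rw [hy]
    exact mcShaneExtension_coe hK hω y
  · filter_upwards [(hG_mem x).coeFn_toLp, (hG_mem x').coeFn_toLp, hgood] with ω hx hx' hω
    rw [hx, hx']
    exact abs_mcShaneExtension_sub_le hK hω x x'

end Extension

theorem exists_complete_denseRange_isometry_factorization.{v} {α : Type v} {E : Type*}
    [MetricSpace E] [CompleteSpace E] (F : α → E) :
    ∃ (N : Type v) (_ : MetricSpace N) (j : α → N) (Fbar : N → E),
      CompleteSpace N ∧ DenseRange j ∧ (∀ x y, dist (j x) (j y) = dist (F x) (F y)) ∧
      Isometry Fbar ∧ ∀ x, F x = Fbar (j x) := by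
  let _ : PseudoMetricSpace α := .induced F inferInstance
  have hF : Isometry F := Isometry.of_dist_eq fun _ _ => rfl
  exact ⟨Completion α, inferInstance, (↑), Completion.extension F, inferInstance,
    Completion.denseRange_coe, Completion.dist_eq, hF.completion_extension,
    fun x => (Completion.extension_coe hF.uniformContinuous x).symm⟩

theorem ae_pointwise_lipschitz_extension_and_maximal_factorization_Lp.{u}
    {Ω : Type*} [MeasurableSpace Ω] (μ : Measure Ω) [IsFiniteMeasure μ]
    (hμ : 0 < μ Set.univ)
    (p : ℝ≥0∞) (hp : 1 ≤ p) (hp' : p ≠ ∞)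
    {M : Type u} [MetricSpace M] (S : Set M) (hS : S.Countable)
    (K : ℝ) (hK : 0 < K) (T : S → Lp ℝ p μ)
    (hT : ∀ x y : S, ∀ᵐ ω ∂μ, |T x ω - T y ω| ≤ K * dist (x : M) (y : M)) :
    ∃ (That : M → Lp ℝ p μ) (N : Type u) (_ : MetricSpace N)
      (j : M → N) (Tbar : N → Lp ℝ p μ),
      (∀ x : S, That x = T x) ∧
      (∀ x y : M, ∀ᵐ ω ∂μ, |That x ω - That y ω| ≤ K * dist x y) ∧
      CompleteSpace N ∧
      DenseRange j ∧
      (∀ x y : M, dist (j x) (j y) =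
        (1 / (K * (μ Set.univ).toReal ^ (1 / p.toReal))) * ‖That x - That y‖) ∧
      (∀ a b : N, dist (Tbar a) (Tbar b) ≤
        K * (μ Set.univ).toReal ^ (1 / p.toReal) * dist a b) ∧
      (∀ x : M, That x = Tbar (j x)) := by
  have : Fact (1 ≤ p) := ⟨hp⟩
  obtain ⟨That, hext, hlip⟩ := exists_ae_lipschitz_extension_Lp hS hK.le T hT
  set L := K * (μ Set.univ).toReal ^ (1 / p.toReal)
  have hL : 0 < L :=
    mul_pos hK (Real.rpow_pos_of_pos (ENNReal.toReal_pos hμ.ne' (measure_ne_top μ _)) _)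
  obtain ⟨N, _, j, Φbar, hN, hj, hdist, hΦbar, hfac⟩ :=
    exists_complete_denseRange_isometry_factorization fun x => L⁻¹ • That x
  refine ⟨That, N, _, j, L • Φbar, hext, hlip, hN, hj, fun x y => ?_,
    fun a b => ?_, fun x => ?_⟩
  · rw [hdist, dist_smul₀, dist_eq_norm, Real.norm_of_nonneg (inv_nonneg.2 hL.le), one_div]
  · rw [Pi.smul_apply, Pi.smul_apply, dist_smul₀, hΦbar.dist_eq, Real.norm_of_nonneg hL.le]
  · rw [Pi.smul_apply, ← hfac, smul_inv_smul₀ hL.ne']
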